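/- arXiv:2103.10935 — 4 statements merged into one kernel-verified Lean document; each statement's English description precedes it below -/
import Mathlib

section
/- Let K : X × X → ℝ be a symmetric positive semidefinite kernel, let z_1,…,z_m ∈ X, and let x_1,…,x_n be a subset of {z_1,…,z_m} such that the n×n matrix K(X̄,X̄) is invertible. Suppose c ∈ ℝ^m is such that the function g(x) = Σ_{j=1}^m c_j K(x, z_j) satisfies g(x_i) = Y_i for i = 1,…,n, where Y ∈ ℝ^n. Then cᵀ K(Z,Z) c ≥ Yᵀ (K(X̄,X̄))^{-1} Y; that is, √(Yᵀ (K(X̄,X̄))^{-1} Y) is a lower bound on the RKHS norm of any representer function interpolating the data, so the kernel interpolant K(·,X̄)(K(X̄,X̄))^{-1}Y is the minimum-RKHS-norm interpolant among such functions. -/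
open Matrix

/-- For a symmetric positive semidefinite kernel `K`, points `z_1,…,z_m`, a
sub-collection `x_1,…,x_n` of the `z_j` with invertible kernel matrix `K(X̄,X̄)`, and any
representer function `g = ∑ j, c j • K (·, z j)` interpolating the data `g (x_i) = Y i`, one
has `Yᵀ (K(X̄,X̄))⁻¹ Y ≤ cᵀ K(Z,Z) c`; moreover the kernel interpolant
`K(·,X̄) (K(X̄,X̄))⁻¹ Y` (whose representer coefficients are `b = (K(X̄,X̄))⁻¹ Y`) attains this
lower bound, so it is the minimum-RKHS-norm interpolant among such functions. -/
theorem kernel_interpolant_min_norm {X : Type*} (K : X → X → ℝ)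
    (hsymm : ∀ x y, K x y = K y x)
    (hpsd : ∀ (p : ℕ) (z : Fin p → X) (c : Fin p → ℝ),
      0 ≤ ∑ i, ∑ j, c i * c j * K (z i) (z j))
    (m n : ℕ) (z : Fin m → X) (ι : Fin n → Fin m) (hι : Function.Injective ι)
    (xs : Fin n → X) (hxs : ∀ i, xs i = z (ι i))
    (Kmat : Matrix (Fin n) (Fin n) ℝ)
    (hKmat : Kmat = Matrix.of fun i j => K (xs i) (xs j))
    (hinv : IsUnit Kmat.det)
    (Y : Fin n → ℝ) (c : Fin m → ℝ)
    (g : X → ℝ) (hg : ∀ x, g x = ∑ j, c j * K x (z j))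
    (hinterp : ∀ i, g (xs i) = Y i) :
    Y ⬝ᵥ (Kmat⁻¹ *ᵥ Y) ≤ ∑ i, ∑ j, c i * c j * K (z i) (z j) ∧
    (∑ i, ∑ j, (Kmat⁻¹ *ᵥ Y) i * (Kmat⁻¹ *ᵥ Y) j * K (xs i) (xs j))
      = Y ⬝ᵥ (Kmat⁻¹ *ᵥ Y) := by
  set b : Fin n → ℝ := Kmat⁻¹ *ᵥ Y with hb
  have hKb : Kmat *ᵥ b = Y := by
    rw [hb, Matrix.mulVec_mulVec, Matrix.mul_nonsing_inv _ hinv, Matrix.one_mulVec]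
  have hg' : ∀ i, ∑ j, c j * K (xs i) (z j) = Y i := fun i => by
    rw [← hg, hinterp]
  -- second part
  have hT : (∑ i, ∑ j, b i * b j * K (xs i) (xs j)) = Y ⬝ᵥ b := by
    have : ∀ i, ∑ j, b i * b j * K (xs i) (xs j) = b i * (Kmat *ᵥ b) i := by
      intro i
      simp only [hKmat, Matrix.mulVec, dotProduct, Matrix.of_apply, Finset.mul_sum]
      exact Finset.sum_congr rfl fun j _ => by ring
    rw [Finset.sum_congr rfl fun i _ => this i]
    rw [hKb, dotProduct]
    exact Finset.sum_congr rfl fun i _ => mul_comm _ _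
  have hbY : (∑ i, b i * Y i) = Y ⬝ᵥ b := by
    rw [dotProduct]; exact Finset.sum_congr rfl fun i _ => mul_comm _ _
  refine ⟨?_, hT⟩
  -- main inequality
  have h0 := hpsd (m + n) (Fin.append z xs) (Fin.append c (fun i => -(b i)))
  have hexp : (∑ i, ∑ j, Fin.append c (fun i => -(b i)) i * Fin.append c (fun i => -(b i)) j
      * K (Fin.append z xs i) (Fin.append z xs j))
      = (∑ i, ∑ j, c i * c j * K (z i) (z j)) - Y ⬝ᵥ b := by
    simp only [Fin.sum_univ_add, Fin.append_left, Fin.append_right]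
    rw [Finset.sum_add_distrib, Finset.sum_add_distrib]
    have hB : (∑ i : Fin m, ∑ j : Fin n, c i * -(b j) * K (z i) (xs j)) = -(Y ⬝ᵥ b) := by
      rw [Finset.sum_comm, ← hbY, ← Finset.sum_neg_distrib]
      refine Finset.sum_congr rfl fun j _ => ?_
      rw [← hg' j, Finset.mul_sum, ← Finset.sum_neg_distrib]
      exact Finset.sum_congr rfl fun i _ => by rw [hsymm]; ring
    have hC : (∑ i : Fin n, ∑ j : Fin m, -(b i) * c j * K (xs i) (z j)) = -(Y ⬝ᵥ b) := by
      rw [← hbY, ← Finset.sum_neg_distrib]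
      refine Finset.sum_congr rfl fun i _ => ?_
      rw [show b i * Y i = b i * ∑ j, c j * K (xs i) (z j) by rw [hg' i],
        Finset.mul_sum, ← Finset.sum_neg_distrib]
      exact Finset.sum_congr rfl fun j _ => by ring
    have hD : (∑ i : Fin n, ∑ j : Fin n, -(b i) * -(b j) * K (xs i) (xs j)) = Y ⬝ᵥ b := by
      rw [← hT]
      exact Finset.sum_congr rfl fun i _ => Finset.sum_congr rfl fun j _ => by ring
    rw [hB, hC, hD]
    ring
  rw [hexp] at h0
  linarith
end

section
/- Let K : X × X → ℝ be a symmetric positive semidefinite kernel, let z_1,…,z_m ∈ X, and let f† = Σ_{j=1}^m c_j K(·, z_j) for some c ∈ ℝ^m. Let X̄ = (x_1,…,x_n) ⊆ {z_1,…,z_m} be points such that K(X̄,X̄) is invertible, set Y := (f†(x_1),…,f†(x_n)), and let f(x) = K(x,X̄)(K(X̄,X̄))^{-1} Y be the kernel interpolant of these values. Then for every x ∈ X, |f†(x) − f(x)| ≤ σ(x) · √(cᵀ K(Z,Z) c), where σ(x) = √(K(x,x) − K(x,X̄)(K(X̄,X̄))^{-1} K(x,X̄)ᵀ); that is, the pointwise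 interpolation error is bounded by the conditional standard deviation times the RKHS norm of f†. -/
open Matrix

/-- For a symmetric positive semidefinite kernel `K`, a representer element
`f† = ∑ j, c j • K (·, z j)`, a sub-collection of points `X̄ = (x_1,…,x_n) ⊆ {z_1,…,z_m}`
with invertible kernel matrix, the kernel interpolant `f` of the values
`Y = (f†(x_1),…,f†(x_n))` satisfies the pointwise error bound
`|f†(x) − f(x)| ≤ σ(x) · ‖f†‖_K`, where `σ(x) = √(K(x,x) − K(x,X̄)(K(X̄,X̄))⁻¹K(x,X̄)ᵀ)` is
the conditional standard deviation and `‖f†‖_K = √(cᵀ K(Z,Z) c)` is the RKHS norm of `f†`. -/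
theorem pointwise_interpolation_error_bound {X : Type*} (K : X → X → ℝ)
    (hsymm : ∀ x y, K x y = K y x)
    (hpsd : ∀ (p : ℕ) (z : Fin p → X) (c : Fin p → ℝ),
      0 ≤ ∑ i, ∑ j, c i * c j * K (z i) (z j))
    (m n : ℕ) (z : Fin m → X) (c : Fin m → ℝ)
    (fdag : X → ℝ) (hfdag : ∀ x, fdag x = ∑ j, c j * K x (z j))
    (ι : Fin n → Fin m) (hι : Function.Injective ι)
    (xs : Fin n → X) (hxs : ∀ i, xs i = z (ι i))
    (Kmat : Matrix (Fin n) (Fin n) ℝ)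
    (hKmat : Kmat = Matrix.of fun i j => K (xs i) (xs j))
    (hinv : IsUnit Kmat.det)
    (Y : Fin n → ℝ) (hY : ∀ i, Y i = fdag (xs i))
    (f : X → ℝ)
    (hf : ∀ x, f x = (fun j => K x (xs j)) ⬝ᵥ (Kmat⁻¹ *ᵥ Y)) :
    ∀ x, |fdag x - f x| ≤
      Real.sqrt (K x x - (fun i => K x (xs i)) ⬝ᵥ (Kmat⁻¹ *ᵥ fun i => K x (xs i))) *
        Real.sqrt (∑ i, ∑ j, c i * c j * K (z i) (z j)) := by
  intro x
  set kx : Fin n → ℝ := fun i => K x (xs i) with hkx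
  set w : Fin n → ℝ := Kmat⁻¹ *ᵥ kx with hw
  have hKT : Kmatᵀ = Kmat := by
    subst hKmat; ext i j; simp [hsymm]
  have hfx : f x = w ⬝ᵥ Y := by
    rw [hf, Matrix.dotProduct_mulVec]
    congr 1
    rw [hw, ← Matrix.mulVec_transpose, Matrix.transpose_nonsing_inv, hKT]
  have hKw : Kmat *ᵥ w = kx := by
    rw [hw, Matrix.mulVec_mulVec, Matrix.mul_nonsing_inv _ hinv, Matrix.one_mulVec]
  set q : Fin (m + (n + 1)) → X := Fin.append z (Fin.snoc xs x) with hq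
  set a : Fin (m + (n + 1)) → ℝ := Fin.append c 0 with ha
  set e : Fin (m + (n + 1)) → ℝ := Fin.append 0 (Fin.snoc (fun i => -(w i)) 1) with he
  set Paa := ∑ i, ∑ j, a i * a j * K (q i) (q j) with hPaa
  set Pae := ∑ i, ∑ j, a i * e j * K (q i) (q j) with hPae
  set Pee := ∑ i, ∑ j, e i * e j * K (q i) (q j) with hPee
  have hsym_cross : ∑ i, ∑ j, e i * a j * K (q i) (q j) = Pae := by
    rw [hPae, Finset.sum_comm]
    exact Finset.sum_congr rfl fun i _ => Finset.sum_congr rfl fun j _ => by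
      rw [hsymm]; ring
  have hquad : ∀ t : ℝ, 0 ≤ Pee * (t * t) + (2 * Pae) * t + Paa := by
    intro t
    have h := hpsd (m + (n + 1)) q (fun i => a i + t * e i)
    have hexp : ∑ i, ∑ j, (a i + t * e i) * (a j + t * e j) * K (q i) (q j)
        = Paa + t * Pae + t * (∑ i, ∑ j, e i * a j * K (q i) (q j))
          + (t * t) * Pee := by
      rw [hPaa, hPae, hPee]
      simp only [Finset.mul_sum, ← Finset.sum_add_distrib]
      exact Finset.sum_congr rfl fun i _ => Finset.sum_congr rfl fun j _ => by ring
    rw [hexp, hsym_cross] at h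
    nlinarith [h]
  have hcs : Pae ^ 2 ≤ Pee * Paa := by
    have hd := discrim_le_zero hquad
    rw [discrim] at hd
    nlinarith [hd]
  have hPee_nonneg : 0 ≤ Pee := hpsd _ q e
  -- compute Paa
  have hPaa_eq : Paa = ∑ i, ∑ j, c i * c j * K (z i) (z j) := by
    rw [hPaa, ha, hq]
    simp [Fin.sum_univ_add, Fin.append_left, Fin.append_right]
  -- compute Pae
  have hPae_eq : Pae = fdag x - f x := by
    rw [hPae, hfx, hfdag, hq, ha, he]
    simp only [Fin.sum_univ_add, Fin.append_left, Fin.append_right, Pi.zero_apply,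
      zero_mul, mul_zero, Finset.sum_const_zero, add_zero, zero_add,
      Fin.sum_univ_castSucc, Fin.snoc_castSucc, Fin.snoc_last, mul_one]
    have h2 : ∑ i : Fin m, c i * K (z i) x = ∑ j : Fin m, c j * K x (z j) :=
      Finset.sum_congr rfl fun i _ => by rw [hsymm]
    have h3 : ∑ i : Fin m, ∑ j : Fin n, c i * -w j * K (z i) (xs j) = -(w ⬝ᵥ Y) := by
      rw [Finset.sum_comm, dotProduct, ← Finset.sum_neg_distrib]
      refine Finset.sum_congr rfl fun j _ => ?_
      rw [hY, hfdag, Finset.mul_sum, ← Finset.sum_neg_distrib]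
      exact Finset.sum_congr rfl fun i _ => by rw [hsymm (z i)]; ring
    rw [Finset.sum_add_distrib, h3, h2]
    ring
  -- compute Pee
  have hPee_eq : Pee = K x x - kx ⬝ᵥ w := by
    rw [hPee, he, hq]
    simp only [Fin.sum_univ_add, Fin.append_left, Fin.append_right, Pi.zero_apply,
      zero_mul, mul_zero, Finset.sum_const_zero, add_zero, zero_add,
      Fin.sum_univ_castSucc, Fin.snoc_castSucc, Fin.snoc_last, mul_one, one_mul]
    have hm : ∑ i : Fin n, ∑ j : Fin n, -(w i) * -(w j) * K (xs i) (xs j)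
        = w ⬝ᵥ (Kmat *ᵥ w) := by
      rw [dotProduct]
      simp only [Matrix.mulVec, dotProduct, hKmat, Matrix.of_apply, Finset.mul_sum]
      exact Finset.sum_congr rfl fun i _ => Finset.sum_congr rfl fun j _ => by ring
    have hA : ∑ i : Fin n, ∑ j : Fin n, -w i * -w j * K (xs i) (xs j)
        = ∑ i : Fin n, w i * K x (xs i) := by
      rw [hm, hKw, dotProduct]
    have hB : ∑ i : Fin n, -w i * K (xs i) x = -∑ i : Fin n, w i * K x (xs i) := by
      rw [← Finset.sum_neg_distrib]
      exact Finset.sum_congr rfl fun i _ => by rw [hsymm]; ring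
    have hC : ∑ i : Fin n, -w i * K x (xs i) = -∑ i : Fin n, w i * K x (xs i) := by
      rw [← Finset.sum_neg_distrib]
      exact Finset.sum_congr rfl fun i _ => by ring
    have hD : kx ⬝ᵥ w = ∑ i : Fin n, w i * K x (xs i) := by
      rw [dotProduct]
      exact Finset.sum_congr rfl fun i _ => by rw [hkx]; ring
    rw [Finset.sum_add_distrib, hA, hB, hC, hD]
    ring
  calc |fdag x - f x| = Real.sqrt (Pae ^ 2) := by rw [Real.sqrt_sq_eq_abs, hPae_eq]
    _ ≤ Real.sqrt (Pee * Paa) := Real.sqrt_le_sqrt hcs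
    _ = Real.sqrt Pee * Real.sqrt Paa := Real.sqrt_mul hPee_nonneg _
    _ = _ := by rw [hPee_eq, hPaa_eq]
end

section
/- Let K : X × X → ℝ be a symmetric positive semidefinite kernel. Let X^b = (x_1,…,x_n) be points with K(X^b,X^b) invertible and Y^b ∈ ℝ^n, and let X^c be a sub-tuple of X^b with K(X^c,X^c) invertible and Y^c the corresponding sub-vector of Y^b. Define the two interpolants u^b(x) = K(x,X^b)(K(X^b,X^b))^{-1} Y^b and u^c(x) = K(x,X^c)(K(X^c,X^c))^{-1} Y^c, both of which are finite linear combinations of the functions K(·, x_i) with x_i ∈ X^b, and let ‖·‖_K denote the RKHS norm on such combinations. If Y^b ≠ 0, then ρ := ‖u^b − u^c‖²_K / ‖u^b‖²_K = 1 − (Y^{c,ᵀ} (K(X^c,X^c))^{-1} Y^c) / (Y^{b,ᵀ} (K(X^b,X^b))^{-1} Y^b). -/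
/-!
Write `A = K(Xᵇ,Xᵇ)`, `b = A⁻¹Yᵇ`, `c = K(Xᶜ,Xᶜ)⁻¹Yᶜ`, and `w` for `c` extended by zero. Since
`Ab = Yᵇ` and the `Xᶜ`-entries of `Aw` are `K(Xᶜ,Xᶜ)c = Yᶜ`, symmetry of `A` gives
`bᵀAw = wᵀAw = Yᶜᵀc`, hence `(b - w)ᵀA(b - w) = Yᵇᵀb - Yᶜᵀc`. The denominator `Yᵇᵀb = bᵀAb`
vanishes only if `Ab = 0`, because `A` is positive semidefinite, i.e. only if `Yᵇ = 0`.
-/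

open Matrix

section FiberSum

variable {R m n : Type*} [Fintype m] [Fintype n] [DecidableEq n]

/-- For injective `ι` this is the extension of `c` by zero along `ι`. -/
def fiberSum [AddCommMonoid R] (ι : m → n) (c : m → R) : n → R :=
  fun i => ∑ j, if ι j = i then c j else 0

variable [CommSemiring R]

theorem fiberSum_dotProduct (ι : m → n) (c : m → R) (v : n → R) :
    fiberSum ι c ⬝ᵥ v = c ⬝ᵥ (v ∘ ι) := by
  simp only [fiberSum, dotProduct, Finset.sum_mul, ite_mul, zero_mul, Function.comp_apply]
  rw [Finset.sum_comm]
  exact Finset.sum_congr rfl fun j _ => Fintype.sum_ite_eq (ι j) fun i => c j * v i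

theorem mulVec_fiberSum_comp (A : Matrix n n R) (ι : m → n) (c : m → R) :
    (A *ᵥ fiberSum ι c) ∘ ι = A.submatrix ι ι *ᵥ c := by
  funext j
  simp only [Function.comp_apply, mulVec, dotProduct_comm (A (ι j)), fiberSum_dotProduct]
  exact dotProduct_comm _ _

theorem dotProduct_mulVec_fiberSum {A : Matrix n n R} (hA : A.IsSymm) (ι : m → n)
    (v : n → R) (c : m → R) :
    v ⬝ᵥ A *ᵥ fiberSum ι c = c ⬝ᵥ ((A *ᵥ v) ∘ ι) := by
  rw [dotProduct_mulVec, ← mulVec_transpose, hA.eq, dotProduct_comm, fiberSum_dotProduct]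

end FiberSum

theorem dotProduct_mulVec_sub_fiberSum {R m n : Type*} [Fintype m] [Fintype n] [DecidableEq n]
    [CommRing R] {A : Matrix n n R} (hA : A.IsSymm) (ι : m → n)
    {y b : n → R} {c : m → R} (hb : A *ᵥ b = y) (hc : A.submatrix ι ι *ᵥ c = y ∘ ι) :
    (b - fiberSum ι c) ⬝ᵥ A *ᵥ (b - fiberSum ι c) = y ⬝ᵥ b - (y ∘ ι) ⬝ᵥ c := by
  have hbb : b ⬝ᵥ A *ᵥ b = y ⬝ᵥ b := by rw [hb, dotProduct_comm]
  have hbw : b ⬝ᵥ A *ᵥ fiberSum ι c = (y ∘ ι) ⬝ᵥ c := by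
    rw [dotProduct_mulVec_fiberSum hA, hb, dotProduct_comm]
  have hwb : fiberSum ι c ⬝ᵥ A *ᵥ b = (y ∘ ι) ⬝ᵥ c := by
    rw [hb, fiberSum_dotProduct, dotProduct_comm]
  have hww : fiberSum ι c ⬝ᵥ A *ᵥ fiberSum ι c = (y ∘ ι) ⬝ᵥ c := by
    rw [fiberSum_dotProduct, mulVec_fiberSum_comp, hc, dotProduct_comm]
  simp only [mulVec_sub, sub_dotProduct, dotProduct_sub, hbb, hbw, hwb, hww]
  ring

theorem Matrix.PosSemidef.dotProduct_ne_zero_of_mulVec_eq {n : Type*} [Fintype n]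
    {A : Matrix n n ℝ} (hA : A.PosSemidef) {y b : n → ℝ} (hb : A *ᵥ b = y) (hy : y ≠ 0) :
    y ⬝ᵥ b ≠ 0 := by
  intro h
  have hbAb : star b ⬝ᵥ A *ᵥ b = 0 := by rw [star_trivial, hb, dotProduct_comm, h]
  exact hy (hb ▸ (hA.dotProduct_mulVec_zero_iff b).mp hbAb)

section KernelMatrix

variable {R X n : Type*}

def kernelMatrix (K : X → X → R) (xs : n → X) : Matrix n n R :=
  Matrix.of fun i j => K (xs i) (xs j)

theorem kernelMatrix_isSymm {K : X → X → R} (hK : ∀ x y, K x y = K y x) (xs : n → X) :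
    (kernelMatrix K xs).IsSymm :=
  IsSymm.ext fun _ _ => hK _ _

variable [Fintype n]

theorem dotProduct_kernelMatrix_mulVec [CommRing R] (K : X → X → R) (xs : n → X) (v : n → R) :
    v ⬝ᵥ kernelMatrix K xs *ᵥ v = ∑ i, ∑ j, v i * v j * K (xs i) (xs j) := by
  simp only [dotProduct, mulVec, kernelMatrix, of_apply, Finset.mul_sum]
  exact Finset.sum_congr rfl fun i _ => Finset.sum_congr rfl fun j _ => by ring

theorem kernelMatrix_posSemidef {K : X → X → ℝ} (hK : ∀ x y, K x y = K y x) (xs : n → X)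
    (hpsd : ∀ c : n → ℝ, 0 ≤ ∑ i, ∑ j, c i * c j * K (xs i) (xs j)) :
    (kernelMatrix K xs).PosSemidef := by
  refine posSemidef_iff_dotProduct_mulVec.mpr ⟨?_, fun c => ?_⟩
  · exact isHermitian_iff_isSymm.mpr (kernelMatrix_isSymm hK xs)
  · rw [star_trivial, dotProduct_kernelMatrix_mulVec]
    exact hpsd c

end KernelMatrix

theorem kernel_flows_rho_representation_general {X : Type*} (K : X → X → ℝ)
    (hsymm : ∀ x y, K x y = K y x)
    (hpsd : ∀ (p : ℕ) (z : Fin p → X) (c : Fin p → ℝ),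
      0 ≤ ∑ i, ∑ j, c i * c j * K (z i) (z j))
    (n p : ℕ) (xs : Fin n → X) (Yb : Fin n → ℝ)
    (ι : Fin p → Fin n)
    (Yc : Fin p → ℝ) (hYc : ∀ j, Yc j = Yb (ι j))
    (Kb : Matrix (Fin n) (Fin n) ℝ)
    (hKb : Kb = Matrix.of fun i j => K (xs i) (xs j))
    (hKbinv : IsUnit Kb.det)
    (Kc : Matrix (Fin p) (Fin p) ℝ)
    (hKc : Kc = Matrix.of fun i j => K (xs (ι i)) (xs (ι j)))
    (hKcinv : IsUnit Kc.det)
    (hYb : Yb ≠ 0)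
    (e : Fin n → ℝ)
    (he : ∀ i, e i = (Kb⁻¹ *ᵥ Yb) i - ∑ j, if ι j = i then (Kc⁻¹ *ᵥ Yc) j else 0) :
    (∑ i, ∑ j, e i * e j * K (xs i) (xs j)) / (Yb ⬝ᵥ (Kb⁻¹ *ᵥ Yb))
      = 1 - (Yc ⬝ᵥ (Kc⁻¹ *ᵥ Yc)) / (Yb ⬝ᵥ (Kb⁻¹ *ᵥ Yb)) := by
  replace hKb : Kb = kernelMatrix K xs := hKb
  replace hKc : Kc = Kb.submatrix ι ι := by rw [hKc, hKb]; rfl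
  replace hYc : Yc = Yb ∘ ι := funext hYc
  have he' : e = Kb⁻¹ *ᵥ Yb - fiberSum ι (Kc⁻¹ *ᵥ Yc) := funext fun i => he i
  have hb : Kb *ᵥ (Kb⁻¹ *ᵥ Yb) = Yb := by
    rw [mulVec_mulVec, mul_nonsing_inv _ hKbinv, one_mulVec]
  have hc : Kb.submatrix ι ι *ᵥ (Kc⁻¹ *ᵥ Yc) = Yb ∘ ι := by
    rw [← hKc, mulVec_mulVec, mul_nonsing_inv _ hKcinv, one_mulVec, hYc]
  have hKb_psd : Kb.PosSemidef := hKb ▸ kernelMatrix_posSemidef hsymm xs (hpsd n xs)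
  have hden : Yb ⬝ᵥ (Kb⁻¹ *ᵥ Yb) ≠ 0 := hKb_psd.dotProduct_ne_zero_of_mulVec_eq hb hYb
  rw [← dotProduct_kernelMatrix_mulVec, ← hKb, he',
    dotProduct_mulVec_sub_fiberSum (hKb ▸ kernelMatrix_isSymm hsymm xs) ι hb hc, ← hYc,
    sub_div, div_self hden]

/-- Kernel Flows loss representation. For a symmetric positive semidefinite
kernel `K`, points `X^b = (x_1,…,x_n)` with invertible kernel matrix `K(Xᵇ,Xᵇ)`, values
`Y^b ∈ ℝ^n`, a sub-tuple `X^c = X^b ∘ ι` (with `ι` injective) with invertible kernel matrix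
and corresponding values `Y^c = Y^b ∘ ι`, consider the interpolants
`u^b = ∑ i, bcoef i • K (·, x_i)` with `bcoef = K(Xᵇ,Xᵇ)⁻¹ Yᵇ` and
`u^c = ∑ j, ccoef j • K (·, x_{ι j})` with `ccoef = K(Xᶜ,Xᶜ)⁻¹ Yᶜ`. Both are linear
combinations of the `K(·, x_i)`, `u^b − u^c` having coefficient vector
`e = bcoef − (extension of ccoef by zero)`, so its squared RKHS norm is
`∑ i, ∑ j, e i * e j * K (x_i) (x_j)`. If `Yᵇ ≠ 0`, then
`ρ = ‖u^b − u^c‖²_K / ‖u^b‖²_K = 1 − (Yᶜᵀ K(Xᶜ,Xᶜ)⁻¹ Yᶜ) / (Yᵇᵀ K(Xᵇ,Xᵇ)⁻¹ Yᵇ)`. -/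
theorem kernel_flows_rho_representation {X : Type*} (K : X → X → ℝ)
    (hsymm : ∀ x y, K x y = K y x)
    (hpsd : ∀ (p : ℕ) (z : Fin p → X) (c : Fin p → ℝ),
      0 ≤ ∑ i, ∑ j, c i * c j * K (z i) (z j))
    (n p : ℕ) (xs : Fin n → X) (Yb : Fin n → ℝ)
    (ι : Fin p → Fin n) (hι : Function.Injective ι)
    (Yc : Fin p → ℝ) (hYc : ∀ j, Yc j = Yb (ι j))
    (Kb : Matrix (Fin n) (Fin n) ℝ)
    (hKb : Kb = Matrix.of fun i j => K (xs i) (xs j))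
    (hKbinv : IsUnit Kb.det)
    (Kc : Matrix (Fin p) (Fin p) ℝ)
    (hKc : Kc = Matrix.of fun i j => K (xs (ι i)) (xs (ι j)))
    (hKcinv : IsUnit Kc.det)
    (hYb : Yb ≠ 0)
    (e : Fin n → ℝ)
    (he : ∀ i, e i = (Kb⁻¹ *ᵥ Yb) i - ∑ j, if ι j = i then (Kc⁻¹ *ᵥ Yc) j else 0) :
    (∑ i, ∑ j, e i * e j * K (xs i) (xs j)) / (Yb ⬝ᵥ (Kb⁻¹ *ᵥ Yb))
      = 1 - (Yc ⬝ᵥ (Kc⁻¹ *ᵥ Yc)) / (Yb ⬝ᵥ (Kb⁻¹ *ᵥ Yb)) :=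
  kernel_flows_rho_representation_general K hsymm hpsd n p xs Yb ι Yc hYc Kb hKb hKbinv Kc hKc
    hKcinv hYb e he
end

section
/- Let K : X × X → ℝ be a symmetric positive semidefinite kernel, let X^b = (x_1,…,x_n) be points with K(X^b,X^b) invertible and Y^b ∈ ℝ^n, and let X^c be a sub-tuple of X^b with K(X^c,X^c) invertible and Y^c the corresponding sub-vector of Y^b. Then Y^{c,ᵀ} (K(X^c,X^c))^{-1} Y^c ≤ Y^{b,ᵀ} (K(X^b,X^b))^{-1} Y^b. Consequently, the Kernel Flows loss ρ = 1 − (Y^{c,ᵀ}(K(X^c,X^c))^{-1}Y^c)/(Y^{b,ᵀ}(K(X^b,X^b))^{-1}Y^b) satisfies 0 ≤ ρ ≤ 1 whenever Y^b ≠ 0. -/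
/-!
For positive semidefinite invertible `M`, the quadratic form `Yᵀ M⁻¹ Y` is the maximum of
`2 cᵀY - cᵀ M c` over all `c`, attained at `c = M⁻¹ Y`. Restricting `c` to vectors supported on
the sub-tuple turns this into the same variational problem for the submatrix `K(Xᶜ, Xᶜ)`, so its
maximum can only be smaller. The denominator of `ρ` is positive because a positive semidefinite
invertible matrix is positive definite.
-/

open Matrix

namespace Matrix.PosSemidef

variable {m n : Type*} [Fintype m] [Fintype n] [DecidableEq m] [DecidableEq n]

theorem two_mul_dotProduct_sub_le_dotProduct_inv_mulVec {M : Matrix n n ℝ} (hM : M.PosSemidef)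
    (hdet : IsUnit M.det) (c Y : n → ℝ) :
    2 * (c ⬝ᵥ Y) - c ⬝ᵥ (M *ᵥ c) ≤ Y ⬝ᵥ (M⁻¹ *ᵥ Y) := by
  set v := M⁻¹ *ᵥ Y
  have hMv : M *ᵥ v = Y := by rw [mulVec_mulVec, mul_nonsing_inv _ hdet, one_mulVec]
  have hsymm : Mᵀ = M := by simpa using hM.isHermitian.eq
  have hvMc : v ⬝ᵥ (M *ᵥ c) = c ⬝ᵥ Y := by
    rw [dotProduct_mulVec, ← mulVec_transpose, hsymm, hMv, dotProduct_comm]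
  have hexpand : (c - v) ⬝ᵥ (M *ᵥ (c - v)) = c ⬝ᵥ (M *ᵥ c) - 2 * (c ⬝ᵥ Y) + Y ⬝ᵥ v := by
    rw [mulVec_sub, hMv, sub_dotProduct, dotProduct_sub, dotProduct_sub, hvMc, dotProduct_comm v Y]
    ring
  have := hM.dotProduct_mulVec_nonneg (c - v)
  rw [star_trivial, hexpand] at this
  linarith

theorem dotProduct_transpose_mul_mul_inv_mulVec_le {M : Matrix n n ℝ} (hM : M.PosSemidef)
    (hdet : IsUnit M.det) (B : Matrix n m ℝ) (hB : IsUnit (Bᵀ * M * B).det) (Y : n → ℝ) :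
    (Bᵀ *ᵥ Y) ⬝ᵥ ((Bᵀ * M * B)⁻¹ *ᵥ (Bᵀ *ᵥ Y)) ≤ Y ⬝ᵥ (M⁻¹ *ᵥ Y) := by
  set a := (Bᵀ * M * B)⁻¹ *ᵥ (Bᵀ *ᵥ Y)
  have hBa : ∀ w, (B *ᵥ a) ⬝ᵥ w = a ⬝ᵥ (Bᵀ *ᵥ w) := fun w => by
    rw [dotProduct_comm, dotProduct_mulVec, ← mulVec_transpose, dotProduct_comm]
  have hBMBa : (Bᵀ * M * B) *ᵥ a = Bᵀ *ᵥ Y := by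
    rw [mulVec_mulVec, mul_nonsing_inv _ hB, one_mulVec]
  have hquad : (B *ᵥ a) ⬝ᵥ (M *ᵥ (B *ᵥ a)) = a ⬝ᵥ (Bᵀ *ᵥ Y) := by
    rw [hBa, mulVec_mulVec, mulVec_mulVec, hBMBa]
  have := hM.two_mul_dotProduct_sub_le_dotProduct_inv_mulVec hdet (B *ᵥ a) Y
  rw [hquad, hBa, dotProduct_comm a] at this
  linarith

theorem dotProduct_submatrix_inv_mulVec_le {M : Matrix n n ℝ} (hM : M.PosSemidef)
    (hdet : IsUnit M.det) (e : m → n) (he : IsUnit (M.submatrix e e).det) (Y : n → ℝ) :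
    (Y ∘ e) ⬝ᵥ ((M.submatrix e e)⁻¹ *ᵥ (Y ∘ e)) ≤ Y ⬝ᵥ (M⁻¹ *ᵥ Y) := by
  set P := (1 : Matrix n n ℝ).submatrix id e
  have hPY : Pᵀ *ᵥ Y = Y ∘ e := by
    ext j; simp [P, mulVec, dotProduct, one_apply]
  have hPMP : Pᵀ * M * P = M.submatrix e e := by
    ext i j; simp [P, mul_apply, one_apply]
  simpa only [hPY, hPMP] using
    hM.dotProduct_transpose_mul_mul_inv_mulVec_le hdet P (hPMP ▸ he) Y

theorem dotProduct_inv_mulVec_pos {M : Matrix n n ℝ} (hM : M.PosSemidef) (hdet : IsUnit M.det)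
    {Y : n → ℝ} (hY : Y ≠ 0) : 0 < Y ⬝ᵥ (M⁻¹ *ᵥ Y) := by
  have hMpd : M.PosDef := hM.posDef_iff_isUnit.mpr ((isUnit_iff_isUnit_det M).mpr hdet)
  simpa using hMpd.inv.dotProduct_mulVec_pos hY

end Matrix.PosSemidef

theorem posSemidef_of_kernel {X : Type*} {K : X → X → ℝ} (hsymm : ∀ x y, K x y = K y x)
    {q : ℕ} {z : Fin q → X} (hpsd : ∀ c : Fin q → ℝ, 0 ≤ ∑ i, ∑ j, c i * c j * K (z i) (z j)) :
    (Matrix.of fun i j => K (z i) (z j)).PosSemidef := by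
  refine .of_dotProduct_mulVec_nonneg ?_ fun c => ?_
  · ext i j; simp [hsymm]
  · simpa [dotProduct, mulVec, Finset.mul_sum, mul_comm, mul_left_comm] using hpsd c

theorem kernel_flows_rho_bounds_general {X : Type*} (K : X → X → ℝ)
    (hsymm : ∀ x y, K x y = K y x)
    (hpsd : ∀ (q : ℕ) (z : Fin q → X) (c : Fin q → ℝ),
      0 ≤ ∑ i, ∑ j, c i * c j * K (z i) (z j))
    (n p : ℕ) (xs : Fin n → X) (Yb : Fin n → ℝ)
    (ι : Fin p → Fin n)
    (Yc : Fin p → ℝ) (hYc : ∀ j, Yc j = Yb (ι j))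
    (Kb : Matrix (Fin n) (Fin n) ℝ)
    (hKb : Kb = Matrix.of fun i j => K (xs i) (xs j))
    (hKbinv : IsUnit Kb.det)
    (Kc : Matrix (Fin p) (Fin p) ℝ)
    (hKc : Kc = Matrix.of fun i j => K (xs (ι i)) (xs (ι j)))
    (hKcinv : IsUnit Kc.det) :
    Yc ⬝ᵥ (Kc⁻¹ *ᵥ Yc) ≤ Yb ⬝ᵥ (Kb⁻¹ *ᵥ Yb) ∧
    (Yb ≠ 0 →
      0 ≤ 1 - (Yc ⬝ᵥ (Kc⁻¹ *ᵥ Yc)) / (Yb ⬝ᵥ (Kb⁻¹ *ᵥ Yb)) ∧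
      1 - (Yc ⬝ᵥ (Kc⁻¹ *ᵥ Yc)) / (Yb ⬝ᵥ (Kb⁻¹ *ᵥ Yb)) ≤ 1) := by
  have hKbpsd : Kb.PosSemidef := hKb ▸ posSemidef_of_kernel hsymm (hpsd n xs)
  obtain rfl : Kc = Kb.submatrix ι ι := by rw [hKc, hKb]; rfl
  obtain rfl : Yc = Yb ∘ ι := funext hYc
  have hle := hKbpsd.dotProduct_submatrix_inv_mulVec_le hKbinv ι hKcinv Yb
  refine ⟨hle, fun hYb => ?_⟩
  have hc_nonneg : 0 ≤ (Yb ∘ ι) ⬝ᵥ ((Kb.submatrix ι ι)⁻¹ *ᵥ (Yb ∘ ι)) := by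
    simpa using (hKbpsd.submatrix ι).inv.dotProduct_mulVec_nonneg (Yb ∘ ι)
  have hb_pos := hKbpsd.dotProduct_inv_mulVec_pos hKbinv hYb
  constructor
  · linarith [(div_le_one hb_pos).mpr hle]
  · linarith [div_nonneg hc_nonneg hb_pos.le]

/-- For a symmetric positive semidefinite kernel `K`, points
`X^b = (x_1,…,x_n)` with invertible kernel matrix, `Y^b ∈ ℝ^n`, and a sub-tuple
`X^c = X^b ∘ ι` with invertible kernel matrix and corresponding values `Y^c = Y^b ∘ ι`,
one has `Yᶜᵀ K(Xᶜ,Xᶜ)⁻¹ Yᶜ ≤ Yᵇᵀ K(Xᵇ,Xᵇ)⁻¹ Yᵇ`. Consequently the Kernel Flows loss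
`ρ = 1 − (Yᶜᵀ K(Xᶜ,Xᶜ)⁻¹ Yᶜ)/(Yᵇᵀ K(Xᵇ,Xᵇ)⁻¹ Yᵇ)` satisfies `0 ≤ ρ ≤ 1` whenever
`Yᵇ ≠ 0`. -/
theorem kernel_flows_rho_bounds {X : Type*} (K : X → X → ℝ)
    (hsymm : ∀ x y, K x y = K y x)
    (hpsd : ∀ (q : ℕ) (z : Fin q → X) (c : Fin q → ℝ),
      0 ≤ ∑ i, ∑ j, c i * c j * K (z i) (z j))
    (n p : ℕ) (xs : Fin n → X) (Yb : Fin n → ℝ)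
    (ι : Fin p → Fin n) (hι : Function.Injective ι)
    (Yc : Fin p → ℝ) (hYc : ∀ j, Yc j = Yb (ι j))
    (Kb : Matrix (Fin n) (Fin n) ℝ)
    (hKb : Kb = Matrix.of fun i j => K (xs i) (xs j))
    (hKbinv : IsUnit Kb.det)
    (Kc : Matrix (Fin p) (Fin p) ℝ)
    (hKc : Kc = Matrix.of fun i j => K (xs (ι i)) (xs (ι j)))
    (hKcinv : IsUnit Kc.det) :
    Yc ⬝ᵥ (Kc⁻¹ *ᵥ Yc) ≤ Yb ⬝ᵥ (Kb⁻¹ *ᵥ Yb) ∧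
    (Yb ≠ 0 →
      0 ≤ 1 - (Yc ⬝ᵥ (Kc⁻¹ *ᵥ Yc)) / (Yb ⬝ᵥ (Kb⁻¹ *ᵥ Yb)) ∧
      1 - (Yc ⬝ᵥ (Kc⁻¹ *ᵥ Yc)) / (Yb ⬝ᵥ (Kb⁻¹ *ᵥ Yb)) ≤ 1) :=
  kernel_flows_rho_bounds_general K hsymm hpsd n p xs Yb ι Yc hYc Kb hKb hKbinv Kc hKc hKcinv
end
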